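/- Let S ⊆ {0,1}ⁿ be nonempty and suppose each isometry V_j : ℂ² → (ℂ²)^⊗m_j maps |0⟩ and |1⟩ to uniform-amplitude states (subset states) over disjoint supports. Then the semi-classical encoded subset state |S_𝒱⟩ = (1/√|S|) Σ_{x∈S} ⊗_j V_j|x_j⟩ is, up to global normalization, a subset state over a set of Σ_j m_j-bit strings. -/

import Mathlib

lemma sqrt_prod_aux {ι : Type*} (s : Finset ι) (f : ι → ℝ) (h : ∀ i ∈ s, 0 ≤ f i) :
    Real.sqrt (∏ i ∈ s, f i) = ∏ i ∈ s, Real.sqrt (f i) := by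
  induction s using Finset.cons_induction with
  | empty => simp
  | cons a s ha ih =>
    rw [Finset.prod_cons, Finset.prod_cons, Real.sqrt_mul (h a (Finset.mem_cons_self a s)),
      ih (fun i hi => h i (Finset.mem_cons_of_mem hi))]

/-- If every isometry `V_j` sends the basis states `|0⟩, |1⟩` to uniform
superpositions (subset states) over disjoint, equal-sized supports
`T_j^0, T_j^1 ⊆ {0,1}^{m_j}`, then the semi-classical encoded subset state
`|S_𝒱⟩ = (1/√|S|) ∑_{x∈S} ⊗_j V_j|x_j⟩` is (exactly, hence in particular up
to global normalization) a subset state over a set of `Σ_j m_j`-bit strings. -/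
theorem encoded_subset_state_is_subset_state (n : ℕ) (m : Fin n → ℕ)
    (S : Finset (Fin n → Bool)) (hS : S.Nonempty)
    (T : (j : Fin n) → Bool → Finset (Fin (m j) → Bool))
    (hTne : ∀ j b, (T j b).Nonempty)
    (hTdisj : ∀ j, Disjoint (T j false) (T j true))
    (hTcard : ∀ j, (T j false).card = (T j true).card) :
    ∃ U : Finset ((j : Fin n) → Fin (m j) → Bool), U.Nonempty ∧
      ∀ y : (j : Fin n) → Fin (m j) → Bool,
        ((Real.sqrt S.card : ℂ))⁻¹ *
            ∑ x ∈ S, ∏ j,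
              (if y j ∈ T j (x j)
                then ((Real.sqrt ((T j (x j)).card) : ℂ))⁻¹ else 0)
          = if y ∈ U then ((Real.sqrt U.card : ℂ))⁻¹ else 0 := by
  classical
  set c : Fin n → ℕ := fun j => (T j true).card with hc_def
  have hc : ∀ j b, (T j b).card = c j := by
    intro j b; cases b
    · exact hTcard j
    · rfl
  -- uniqueness of the branch
  have key : ∀ (j : Fin n) (b b' : Bool) (z : Fin (m j) → Bool),
      z ∈ T j b → z ∈ T j b' → b = b' := by
    intro j b b' z hz hz'
    by_contra hne
    have hd := hTdisj j
    cases b <;> cases b'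
    · exact hne rfl
    · exact Finset.disjoint_left.1 hd hz hz'
    · exact Finset.disjoint_left.1 hd hz' hz
    · exact hne rfl
  refine ⟨S.biUnion (fun x => Fintype.piFinset (fun j => T j (x j))), ?_, ?_⟩
  · obtain ⟨x, hx⟩ := hS
    refine ⟨fun j => (hTne j (x j)).choose, Finset.mem_biUnion.2 ⟨x, hx, ?_⟩⟩
    exact Fintype.mem_piFinset.2 fun j => (hTne j (x j)).choose_spec
  intro y
  set U := S.biUnion (fun x => Fintype.piFinset (fun j => T j (x j))) with hU
  -- disjointness of the pieces
  have hdisj : ∀ x ∈ S, ∀ x' ∈ S, x ≠ x' →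
      Disjoint (Fintype.piFinset (fun j => T j (x j)))
        (Fintype.piFinset (fun j => T j (x' j))) := by
    intro x _ x' _ hne
    rw [Finset.disjoint_left]
    intro z hz hz'
    exact hne (funext fun j => key j (x j) (x' j) (z j)
      (Fintype.mem_piFinset.1 hz j) (Fintype.mem_piFinset.1 hz' j))
  have hUcard : U.card = S.card * ∏ j, c j := by
    rw [hU, Finset.card_biUnion hdisj]
    have : ∀ x ∈ S, (Fintype.piFinset (fun j => T j (x j))).card = ∏ j, c j := by
      intro x _
      rw [Fintype.card_piFinset]
      exact Finset.prod_congr rfl fun j _ => hc j (x j)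
    rw [Finset.sum_congr rfl this, Finset.sum_const, smul_eq_mul]
  have hUval : (Real.sqrt U.card : ℂ)⁻¹
      = (Real.sqrt S.card : ℂ)⁻¹ * ∏ j, (Real.sqrt (c j) : ℂ)⁻¹ := by
    rw [hUcard]
    push_cast
    rw [Real.sqrt_mul (Nat.cast_nonneg _),
      sqrt_prod_aux Finset.univ (fun j => (c j : ℝ)) (fun j _ => Nat.cast_nonneg _)]
    push_cast
    rw [mul_inv, Finset.prod_inv_distrib]
  by_cases hy : y ∈ U
  · obtain ⟨x₀, hx₀S, hx₀⟩ := Finset.mem_biUnion.1 hy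
    have hmem : ∀ j, y j ∈ T j (x₀ j) := Fintype.mem_piFinset.1 hx₀
    have hsum : ∑ x ∈ S, ∏ j,
        (if y j ∈ T j (x j) then ((Real.sqrt ((T j (x j)).card) : ℂ))⁻¹ else 0)
        = ∏ j, (Real.sqrt (c j) : ℂ)⁻¹ := by
      rw [Finset.sum_eq_single x₀]
      · refine Finset.prod_congr rfl fun j _ => ?_
        rw [if_pos (hmem j), hc j (x₀ j)]
      · intro x hxS hne
        obtain ⟨j, hj⟩ := Function.ne_iff.1 hne
        refine Finset.prod_eq_zero (Finset.mem_univ j) ?_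
        rw [if_neg]
        intro hyj
        exact hj (key j (x j) (x₀ j) (y j) hyj (hmem j))
      · intro h; exact absurd hx₀S h
    rw [hsum, if_pos hy, hUval]
  · rw [if_neg hy]
    have hsum : ∑ x ∈ S, ∏ j,
        (if y j ∈ T j (x j) then ((Real.sqrt ((T j (x j)).card) : ℂ))⁻¹ else 0) = 0 := by
      refine Finset.sum_eq_zero fun x hxS => ?_
      by_cases hall : ∀ j, y j ∈ T j (x j)
      · exact absurd (Finset.mem_biUnion.2 ⟨x, hxS, Fintype.mem_piFinset.2 hall⟩) hy
      · obtain ⟨j, hj⟩ := not_forall.1 hall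
        exact Finset.prod_eq_zero (Finset.mem_univ j) (if_neg hj)
    rw [hsum, mul_zero]
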